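/- One step of the approximate limited-attention PageRank push operation preserves the invariant c̃r = cr(s) − cr(r). That is, if c̃r = cr(s − r), and we update c̃r' = c̃r + (1−α)·r[i]·z_i and r' = r − r[i]·z_i + α·r[i]·z_i·M (where z_i is the i-th standard basis row vector), then c̃r' = cr(s − r'). -/

import Mathlib

/-!
The fixed-point equation `cr x = (1 - α) x + α (cr x) M` says `(cr x) (I - α M) = (1 - α) x`.
Since `αρ(M) < 1`, the matrix `I - α M` is invertible, so `cr` is linear and
`cr (y - α y M) = (1 - α) y`. The push step moves `y = r[i] z_i - α r[i] z_i M` from `r` to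
`s - r`, so `cr (s - r')` gains exactly `(1 - α) r[i] z_i`.
-/

open Matrix BigOperators Filter

noncomputable def specRad {n : ℕ} (M : Matrix (Fin n) (Fin n) ℝ) : ENNReal :=
  spectralRadius ℂ (M.map (algebraMap ℝ ℂ))

-- Any Banach algebra norm on matrices serves: the spectral radius does not depend on it.
attribute [local instance] Matrix.linftyOpNormedRing Matrix.linftyOpNormedAlgebra

lemma isUnit_one_sub_smul_map_complex_of_mul_specRad_lt_one {n : ℕ}
    {M : Matrix (Fin n) (Fin n) ℝ} {α : ℝ} (hα : 0 ≤ α) (hρ : ENNReal.ofReal α * specRad M < 1) :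
    IsUnit (1 - (α : ℂ) • M.map (algebraMap ℝ ℂ)) := by
  rcases hα.eq_or_lt with rfl | hα
  · simp
  refine spectrum.isUnit_one_sub_smul_of_lt_inv_radius ?_
  have hnorm : ((‖(α : ℂ)‖₊ : NNReal) : ENNReal) = ENNReal.ofReal α := by
    rw [Complex.nnnorm_real, ← enorm_eq_nnnorm, Real.enorm_eq_ofReal hα.le]
  rwa [hnorm, ← one_div,
    ENNReal.lt_div_iff_mul_lt (.inr ENNReal.ofReal_ne_top) (.inr (by simpa using hα))]

lemma isUnit_one_sub_smul_of_mul_specRad_lt_one {n : ℕ} {M : Matrix (Fin n) (Fin n) ℝ} {α : ℝ}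
    (hα : 0 ≤ α) (hρ : ENNReal.ofReal α * specRad M < 1) : IsUnit (1 - α • M) := by
  have hmap : (1 - α • M).map (algebraMap ℝ ℂ) = 1 - (α : ℂ) • M.map (algebraMap ℝ ℂ) := by
    ext i j
    simp [Matrix.one_apply, apply_ite]
  have hC := isUnit_one_sub_smul_map_complex_of_mul_specRad_lt_one hα hρ
  rw [← hmap, Matrix.isUnit_iff_isUnit_det, ← RingHom.mapMatrix_apply, ← RingHom.map_det,
    isUnit_map_iff] at hC
  rwa [Matrix.isUnit_iff_isUnit_det]

section FixedPoint

variable {ι K : Type*} [Fintype ι] [DecidableEq ι] [Field K] {M : Matrix ι ι K} {α : K}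
  {cr : (ι → K) → ι → K}

lemma vecMul_one_sub_smul (x : ι → K) : x ᵥ* (1 - α • M) = x - α • x ᵥ* M := by
  rw [vecMul_sub, vecMul_one, vecMul_smul]

lemma vecMul_one_sub_smul_of_fixedPoint
    (hcr : ∀ x, cr x = (1 - α) • x + α • cr x ᵥ* M) (x : ι → K) :
    cr x ᵥ* (1 - α • M) = (1 - α) • x := by
  rw [vecMul_one_sub_smul, sub_eq_iff_eq_add]
  exact hcr x

lemma fixedPoint_add (hM : IsUnit (1 - α • M))
    (hcr : ∀ x, cr x = (1 - α) • x + α • cr x ᵥ* M) (x y : ι → K) :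
    cr (x + y) = cr x + cr y := by
  apply vecMul_injective_iff_isUnit.mpr hM
  beta_reduce
  simp only [add_vecMul, vecMul_one_sub_smul_of_fixedPoint hcr, smul_add]

lemma fixedPoint_sub_smul_vecMul (hM : IsUnit (1 - α • M))
    (hcr : ∀ x, cr x = (1 - α) • x + α • cr x ᵥ* M) (y : ι → K) :
    cr (y - α • y ᵥ* M) = (1 - α) • y := by
  apply vecMul_injective_iff_isUnit.mpr hM
  beta_reduce
  rw [vecMul_one_sub_smul_of_fixedPoint hcr, smul_vecMul, vecMul_one_sub_smul]

end FixedPoint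

theorem laPR_push_invariant_general {n : ℕ} (M : Matrix (Fin n) (Fin n) ℝ) (α : ℝ)
    (hα0 : 0 ≤ α) (hρ : ENNReal.ofReal α * specRad M < 1)
    (cr : (Fin n → ℝ) → (Fin n → ℝ))
    (hcr : ∀ x, cr x = (1 - α) • x + α • Matrix.vecMul (cr x) M)
    (s r crt : Fin n → ℝ) (i : Fin n)
    (hinv : crt = cr (s - r)) :
    crt + (1 - α) • (r i • (Pi.single i 1 : Fin n → ℝ)) =
      cr (s - (r - r i • (Pi.single i 1 : Fin n → ℝ) +
        α • (r i • Matrix.vecMul ((Pi.single i 1 : Fin n → ℝ)) M))) := by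
  have hM := isUnit_one_sub_smul_of_mul_specRad_lt_one hα0 hρ
  set y : Fin n → ℝ := r i • Pi.single i 1
  have hpush : s - (r - y + α • (r i • Pi.single i 1 ᵥ* M)) = (s - r) + (y - α • y ᵥ* M) := by
    rw [← smul_vecMul]
    abel
  rw [hpush, fixedPoint_add hM hcr, fixedPoint_sub_smul_vecMul hM hcr, hinv]

/-- The laPR push step preserves the invariant c̃r = cr(s - r). -/
theorem laPR_push_invariant {n : ℕ} (M : Matrix (Fin n) (Fin n) ℝ) (α : ℝ)
    (hα0 : 0 ≤ α) (hα1 : α < 1) (hρ : ENNReal.ofReal α * specRad M < 1)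
    (cr : (Fin n → ℝ) → (Fin n → ℝ))
    (hcr : ∀ x, cr x = (1 - α) • x + α • Matrix.vecMul (cr x) M)
    (s r crt : Fin n → ℝ) (i : Fin n)
    (hinv : crt = cr (s - r)) :
    crt + (1 - α) • (r i • (Pi.single i 1 : Fin n → ℝ)) =
      cr (s - (r - r i • (Pi.single i 1 : Fin n → ℝ) +
        α • (r i • Matrix.vecMul ((Pi.single i 1 : Fin n → ℝ)) M))) :=
  laPR_push_invariant_general M α hα0 hρ cr hcr s r crt i hinv
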